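/- Let $K$ be a field of characteristic 2 and $S = K[x,y,z]$, $I = (x^2, y^2, z^2)$. Then $S/I$ does not have the weak Lefschetz property: for every linear form $l = ax + by + cz$, the multiplication map $(S/I)_1 \to (S/I)_2$, $f \mapsto lf$, is not injective (note $\dim_K (S/I)_1 = \dim_K (S/I)_2 = 3$). -/
import Mathlib


open MvPolynomial

variable {K : Type*} [Field K] {n : ℕ}

/-- The total degree of an exponent vector. -/
def mdeg {n : ℕ} (m : Fin n →₀ ℕ) : ℕ := m.sum fun _ e => e

/-- `I` is a monomial ideal: it contains every monomial of each of its elements. -/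
def IsMonomialIdeal (I : Ideal (MvPolynomial (Fin n) K)) : Prop :=
  ∀ f ∈ I, ∀ m ∈ f.support, (monomial m (1 : K)) ∈ I

/-- `I` is stable: for every monomial `u ∈ I` with largest dividing variable `x_k`,
and every `i ≤ k`, the monomial `(x_i / x_k) * u` lies in `I`. -/
def IsStableIdeal (I : Ideal (MvPolynomial (Fin n) K)) : Prop :=
  ∀ m : Fin n →₀ ℕ, (monomial m (1 : K)) ∈ I →
    ∀ k i : Fin n, m k ≠ 0 → (∀ k', k < k' → m k' = 0) → i ≤ k →
      (monomial (m + Finsupp.single i 1 - Finsupp.single k 1) (1 : K)) ∈ I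

/-- `I` is strongly stable: for every monomial `u ∈ I`, every variable `x_k` dividing `u`
and every `i ≤ k`, the monomial `(x_i / x_k) * u` lies in `I`. -/
def IsStronglyStableIdeal (I : Ideal (MvPolynomial (Fin n) K)) : Prop :=
  ∀ m : Fin n →₀ ℕ, (monomial m (1 : K)) ∈ I →
    ∀ k i : Fin n, m k ≠ 0 → i ≤ k →
      (monomial (m + Finsupp.single i 1 - Finsupp.single k 1) (1 : K)) ∈ I

/-- `v <_lex u` for exponent vectors, lex order with `x_1 > x_2 > ⋯ > x_n`. -/
def lexLt {n : ℕ} (v u : Fin n →₀ ℕ) : Prop :=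
  ∃ i : Fin n, (∀ j < i, v j = u j) ∧ v i < u i

/-- `I` is a lexsegment ideal. -/
def IsLexsegmentIdeal (I : Ideal (MvPolynomial (Fin n) K)) : Prop :=
  IsMonomialIdeal I ∧
    ∀ u v : Fin n →₀ ℕ, (monomial u (1 : K)) ∈ I → mdeg v = mdeg u → lexLt u v →
      (monomial v (1 : K)) ∈ I

/-- The degree `j` piece of `S/I`, as the image of the degree `j` homogeneous polynomials. -/
noncomputable def Qpiece (I : Ideal (MvPolynomial (Fin n) K)) (j : ℕ) :
    Submodule K (MvPolynomial (Fin n) K ⧸ I) :=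
  (homogeneousSubmodule (Fin n) K j).map (Ideal.Quotient.mkₐ K I).toLinearMap

/-- Multiplication by `g` maps `(S/I)_j` injectively (to `(S/I)_{j'}`). -/
def QInj (I : Ideal (MvPolynomial (Fin n) K)) (g : MvPolynomial (Fin n) K)
    (j _j' : ℕ) : Prop :=
  ∀ f₁ ∈ Qpiece I j, ∀ f₂ ∈ Qpiece I j,
    Ideal.Quotient.mk I g * f₁ = Ideal.Quotient.mk I g * f₂ → f₁ = f₂

/-- Multiplication by `g` maps `(S/I)_j` onto `(S/I)_{j'}`. -/
def QSurj (I : Ideal (MvPolynomial (Fin n) K)) (g : MvPolynomial (Fin n) K)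
    (j j' : ℕ) : Prop :=
  ∀ h ∈ Qpiece I j', ∃ f ∈ Qpiece I j, Ideal.Quotient.mk I g * f = h

/-- Multiplication by `g` from `(S/I)_j` to `(S/I)_{j'}` has maximal rank. -/
def MulMaxRank (I : Ideal (MvPolynomial (Fin n) K)) (g : MvPolynomial (Fin n) K)
    (j j' : ℕ) : Prop :=
  QInj I g j j' ∨ QSurj I g j j'


set_option maxHeartbeats 1000000

section Aux

lemma memI_aux {I : Ideal (MvPolynomial (Fin 3) K)}
    (hI : I = Ideal.span {(X 0 : MvPolynomial (Fin 3) K) ^ 2, X 1 ^ 2, X 2 ^ 2})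
    {f : MvPolynomial (Fin 3) K} (hf : f ∈ I) :
    ∃ p q r : MvPolynomial (Fin 3) K, f = p * X 0 ^ 2 + q * X 1 ^ 2 + r * X 2 ^ 2 := by
  subst hI
  rw [show ({(X 0 : MvPolynomial (Fin 3) K) ^ 2, X 1 ^ 2, X 2 ^ 2} : Set _)
      = insert ((X 0 : MvPolynomial (Fin 3) K) ^ 2) (insert (X 1 ^ 2) {X 2 ^ 2}) from rfl,
    Ideal.span, Submodule.mem_span_insert] at hf
  obtain ⟨p, z, hz, rfl⟩ := hf
  rw [Submodule.mem_span_insert] at hz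
  obtain ⟨q, z', hz', rfl⟩ := hz
  rw [Submodule.mem_span_singleton] at hz'
  obtain ⟨r, rfl⟩ := hz'
  exact ⟨p, q, r, by simp [smul_eq_mul]; ring⟩

lemma sfCoeff {I : Ideal (MvPolynomial (Fin 3) K)}
    (hI : I = Ideal.span {(X 0 : MvPolynomial (Fin 3) K) ^ 2, X 1 ^ 2, X 2 ^ 2}) :
    ∀ f ∈ I, ∀ m : Fin 3 →₀ ℕ, (∀ i, m i ≤ 1) → coeff m f = 0 := by
  intro f hf m hm
  obtain ⟨p, q, r, rfl⟩ := memI_aux hI hf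
  have key : ∀ (i : Fin 3) (g : MvPolynomial (Fin 3) K), coeff m (g * X i ^ 2) = 0 := by
    intro i g
    rw [X_pow_eq_monomial, coeff_mul_monomial']
    rw [if_neg]
    intro h
    have := h i
    simp [Finsupp.single_apply] at this
    have := hm i
    omega
  simp [coeff_add, key]

lemma sq_memI {I : Ideal (MvPolynomial (Fin 3) K)}
    (hI : I = Ideal.span {(X 0 : MvPolynomial (Fin 3) K) ^ 2, X 1 ^ 2, X 2 ^ 2})
    (i : Fin 3) : (X i : MvPolynomial (Fin 3) K) ^ 2 ∈ I := by
  subst hI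
  apply Ideal.subset_span
  fin_cases i <;> simp

lemma XX_eq_aux (i j : Fin 3) : (X i : MvPolynomial (Fin 3) K) * X j
    = monomial (Finsupp.single i 1 + Finsupp.single j 1) 1 := by
  rw [monomial_single_add, pow_one]; rfl

lemma ne_app_aux {m m' : Fin 3 →₀ ℕ} (j : Fin 3) (h : m j ≠ m' j) : m ≠ m' :=
  fun e => h (by rw [e])

lemma deg_sum_eq {f : MvPolynomial (Fin 3) K} {j : ℕ} (hf : f.IsHomogeneous j)
    {m : Fin 3 →₀ ℕ} (hm : m ∈ f.support) : m 0 + m 1 + m 2 = j := by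
  have h := hf (mem_support_iff.mp hm)
  rw [Finsupp.weight_apply, Finsupp.sum_fintype] at h
  · rw [Fin.sum_univ_three] at h; simpa using h
  · intro i; simp


lemma deg1_classify_aux {m : Fin 3 →₀ ℕ} (h : m 0 + m 1 + m 2 = 1) :
    m = Finsupp.single 0 1 ∨ m = Finsupp.single 1 1 ∨ m = Finsupp.single 2 1 := by
  have h0 : m 0 = 1 ∧ m 1 = 0 ∧ m 2 = 0 ∨ m 0 = 0 ∧ m 1 = 1 ∧ m 2 = 0 ∨
      m 0 = 0 ∧ m 1 = 0 ∧ m 2 = 1 := by omega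
  rcases h0 with ⟨a,b,c⟩|⟨a,b,c⟩|⟨a,b,c⟩
  · left; ext j; fin_cases j <;> simp_all [Finsupp.single_apply]
  · right; left; ext j; fin_cases j <;> simp_all [Finsupp.single_apply]
  · right; right; ext j; fin_cases j <;> simp_all [Finsupp.single_apply]

lemma deg2_classify_aux {m : Fin 3 →₀ ℕ} (h : m 0 + m 1 + m 2 = 2) :
    m = Finsupp.single 0 2 ∨ m = Finsupp.single 1 2 ∨ m = Finsupp.single 2 2 ∨
    m = Finsupp.single 0 1 + Finsupp.single 1 1 ∨
    m = Finsupp.single 0 1 + Finsupp.single 2 1 ∨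
    m = Finsupp.single 1 1 + Finsupp.single 2 1 := by
  have h0 : (m 0 = 2 ∧ m 1 = 0 ∧ m 2 = 0) ∨ (m 0 = 0 ∧ m 1 = 2 ∧ m 2 = 0) ∨
      (m 0 = 0 ∧ m 1 = 0 ∧ m 2 = 2) ∨ (m 0 = 1 ∧ m 1 = 1 ∧ m 2 = 0) ∨
      (m 0 = 1 ∧ m 1 = 0 ∧ m 2 = 1) ∨ (m 0 = 0 ∧ m 1 = 1 ∧ m 2 = 1) := by omega
  rcases h0 with ⟨a,b,c⟩|⟨a,b,c⟩|⟨a,b,c⟩|⟨a,b,c⟩|⟨a,b,c⟩|⟨a,b,c⟩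
  · left; ext j; fin_cases j <;> simp_all [Finsupp.single_apply]
  · right; left; ext j; fin_cases j <;> simp_all [Finsupp.single_apply]
  · right; right; left; ext j; fin_cases j <;> simp_all [Finsupp.single_apply]
  · right; right; right; left; ext j; fin_cases j <;> simp_all [Finsupp.single_apply]
  · right; right; right; right; left; ext j; fin_cases j <;> simp_all [Finsupp.single_apply]
  · right; right; right; right; right; ext j; fin_cases j <;> simp_all [Finsupp.single_apply]

lemma Q1_span (I : Ideal (MvPolynomial (Fin 3) K)) :
    Qpiece I 1 = Submodule.span K
      (Set.range ![Ideal.Quotient.mkₐ K I (X 0), Ideal.Quotient.mkₐ K I (X 1),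
        Ideal.Quotient.mkₐ K I (X 2)]) := by
  apply le_antisymm
  · rintro v ⟨f, hf, rfl⟩
    replace hf : f.IsHomogeneous 1 := hf
    rw [f.as_sum, map_sum]
    apply Submodule.sum_mem
    intro m hm
    have hd : m 0 + m 1 + m 2 = 1 := deg_sum_eq hf hm
    have : (monomial m (coeff m f) : MvPolynomial (Fin 3) K) = coeff m f • monomial m 1 := by
      rw [smul_monomial, smul_eq_mul, mul_one]
    rw [this, map_smul]
    apply Submodule.smul_mem
    apply Submodule.subset_span
    have hcl := deg1_classify_aux hd
    rcases hcl with rfl | rfl | rfl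
    · exact ⟨0, by simp [X]⟩
    · exact ⟨1, by simp [X]⟩
    · exact ⟨2, by simp [X]⟩
  · rw [Submodule.span_le]
    rintro v ⟨i, rfl⟩
    fin_cases i <;>
      exact ⟨X _, (mem_homogeneousSubmodule _ _).mpr (isHomogeneous_X _ _), rfl⟩

lemma Q2_span {I : Ideal (MvPolynomial (Fin 3) K)}
    (hI : I = Ideal.span {(X 0 : MvPolynomial (Fin 3) K) ^ 2, X 1 ^ 2, X 2 ^ 2}) :
    Qpiece I 2 = Submodule.span K
      (Set.range ![Ideal.Quotient.mkₐ K I (X 0 * X 1), Ideal.Quotient.mkₐ K I (X 0 * X 2),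
        Ideal.Quotient.mkₐ K I (X 1 * X 2)]) := by
  apply le_antisymm
  · rintro v ⟨f, hf, rfl⟩
    replace hf : f.IsHomogeneous 2 := hf
    rw [f.as_sum, map_sum]
    apply Submodule.sum_mem
    intro m hm
    have hd : m 0 + m 1 + m 2 = 2 := deg_sum_eq hf hm
    have hsm : (monomial m (coeff m f) : MvPolynomial (Fin 3) K) = coeff m f • monomial m 1 := by
      rw [smul_monomial, smul_eq_mul, mul_one]
    rw [hsm, map_smul]
    apply Submodule.smul_mem
    have hcl := deg2_classify_aux hd
    have sq0 : ∀ i : Fin 3,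
        (Ideal.Quotient.mkₐ K I).toLinearMap (monomial (Finsupp.single i 2) (1 : K)) = 0 := by
      intro i
      show Ideal.Quotient.mkₐ K I _ = 0
      rw [← X_pow_eq_monomial]
      exact Ideal.Quotient.eq_zero_iff_mem.mpr (sq_memI hI i)
    rcases hcl with rfl | rfl | rfl | rfl | rfl | rfl
    · rw [sq0]; exact Submodule.zero_mem _
    · rw [sq0]; exact Submodule.zero_mem _
    · rw [sq0]; exact Submodule.zero_mem _
    · exact Submodule.subset_span ⟨0, by simp [XX_eq_aux]⟩
    · exact Submodule.subset_span ⟨1, by simp [XX_eq_aux]⟩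
    · exact Submodule.subset_span ⟨2, by simp [XX_eq_aux]⟩
  · rw [Submodule.span_le]
    rintro v ⟨i, rfl⟩
    fin_cases i <;>
      exact ⟨X _ * X _, (mem_homogeneousSubmodule _ _).mpr
        ((isHomogeneous_X _ _).mul (isHomogeneous_X _ _)), rfl⟩

lemma lid1 {I : Ideal (MvPolynomial (Fin 3) K)}
    (hI : I = Ideal.span {(X 0 : MvPolynomial (Fin 3) K) ^ 2, X 1 ^ 2, X 2 ^ 2}) :
    LinearIndependent K ![Ideal.Quotient.mkₐ K I (X 0), Ideal.Quotient.mkₐ K I (X 1),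
      Ideal.Quotient.mkₐ K I (X 2)] := by
  have hsf := sfCoeff hI
  rw [Fintype.linearIndependent_iff]
  intro g hg
  rw [Fin.sum_univ_three] at hg
  simp only [Matrix.cons_val_zero, Matrix.cons_val_one, Matrix.head_cons,
    Matrix.cons_val_two, Matrix.tail_cons, ← map_smul, ← map_add] at hg
  rw [show (Ideal.Quotient.mkₐ K I) (g 0 • X 0 + g 1 • X 1 + g 2 • X 2) =
    Ideal.Quotient.mk I (g 0 • X 0 + g 1 • X 1 + g 2 • X 2) from rfl,
    Ideal.Quotient.eq_zero_iff_mem] at hg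
  have sf : ∀ i : Fin 3, ∀ j, (Finsupp.single i 1 : Fin 3 →₀ ℕ) j ≤ 1 := by
    intro i j; simp [Finsupp.single_apply]; split <;> omega
  have key := fun i => hsf _ hg (Finsupp.single i 1) (sf i)
  intro i
  fin_cases i
  · have := key 0
    simp [coeff_smul, coeff_X', Finsupp.single_left_inj] at this
    simpa using this
  · have := key 1
    simp [coeff_smul, coeff_X', Finsupp.single_left_inj] at this
    simpa using this
  · have := key 2
    simp [coeff_smul, coeff_X', Finsupp.single_left_inj] at this
    simpa using this

lemma lid2 {I : Ideal (MvPolynomial (Fin 3) K)}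
    (hI : I = Ideal.span {(X 0 : MvPolynomial (Fin 3) K) ^ 2, X 1 ^ 2, X 2 ^ 2}) :
    LinearIndependent K ![Ideal.Quotient.mkₐ K I (X 0 * X 1),
      Ideal.Quotient.mkₐ K I (X 0 * X 2), Ideal.Quotient.mkₐ K I (X 1 * X 2)] := by
  have hsf := sfCoeff hI
  rw [Fintype.linearIndependent_iff]
  intro g hg
  rw [Fin.sum_univ_three] at hg
  simp only [Matrix.cons_val_zero, Matrix.cons_val_one, Matrix.head_cons,
    Matrix.cons_val_two, Matrix.tail_cons, ← map_smul, ← map_add] at hg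
  rw [show (Ideal.Quotient.mkₐ K I) (g 0 • (X 0 * X 1) + g 1 • (X 0 * X 2) + g 2 • (X 1 * X 2)) =
    Ideal.Quotient.mk I (g 0 • (X 0 * X 1) + g 1 • (X 0 * X 2) + g 2 • (X 1 * X 2)) from rfl,
    Ideal.Quotient.eq_zero_iff_mem] at hg
  have sf2 : ∀ (i j : Fin 3), i ≠ j →
      ∀ k, (Finsupp.single i 1 + Finsupp.single j 1 : Fin 3 →₀ ℕ) k ≤ 1 := by
    intro i j hij k
    rw [Finsupp.add_apply, Finsupp.single_apply, Finsupp.single_apply]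
    split_ifs with h1 h2 h2 <;>
      first
      | exact absurd (h1.trans h2.symm) hij
      | omega
  have key := fun (i j : Fin 3) (hij : i ≠ j) =>
    hsf _ hg (Finsupp.single i 1 + Finsupp.single j 1) (sf2 i j hij)
  have e01 := key 0 1 (by decide)
  have e02 := key 0 2 (by decide)
  have e12 := key 1 2 (by decide)
  have n1 : (Finsupp.single (0:Fin 3) 1 + Finsupp.single 1 1 : Fin 3 →₀ ℕ)
      ≠ Finsupp.single 0 1 + Finsupp.single 2 1 := ne_app_aux 1 (by simp [Finsupp.single_apply])
  have n2 : (Finsupp.single (0:Fin 3) 1 + Finsupp.single 1 1 : Fin 3 →₀ ℕ)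
      ≠ Finsupp.single 1 1 + Finsupp.single 2 1 := ne_app_aux 0 (by simp [Finsupp.single_apply])
  have n3 : (Finsupp.single (0:Fin 3) 1 + Finsupp.single 2 1 : Fin 3 →₀ ℕ)
      ≠ Finsupp.single 1 1 + Finsupp.single 2 1 := ne_app_aux 0 (by simp [Finsupp.single_apply])
  rw [XX_eq_aux, XX_eq_aux, XX_eq_aux] at e01 e02 e12
  simp [coeff_smul, coeff_monomial, n1, n2, n3, n1.symm, n2.symm, n3.symm] at e01 e02 e12
  intro i
  fin_cases i
  · simpa using e01
  · simpa using e02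
  · simpa using e12

end Aux

lemma sf_single : ∀ i : Fin 3, ∀ j, (Finsupp.single i 1 : Fin 3 →₀ ℕ) j ≤ 1 := by
  intro i j
  rw [Finsupp.single_apply]
  split <;> omega


/-- In characteristic 2, `S/(x²,y²,z²)` does not have the weak Lefschetz property:
for every linear form `l = ax + by + cz`, multiplication by `l` from `(S/I)_1`
to `(S/I)_2` is not injective (note both spaces have dimension 3). -/
theorem stmt_4 [CharP K 2]
    (I : Ideal (MvPolynomial (Fin 3) K))
    (hI : I = Ideal.span {(X 0 : MvPolynomial (Fin 3) K) ^ 2, X 1 ^ 2, X 2 ^ 2}) :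
    Module.finrank K (Qpiece I 1) = 3 ∧ Module.finrank K (Qpiece I 2) = 3 ∧
    ∀ a b c : K, ¬ QInj I (C a * X 0 + C b * X 1 + C c * X 2) 1 2 := by
  refine ⟨?_, ?_, ?_⟩
  · rw [Q1_span I, finrank_span_eq_card (lid1 hI)]
    simp
  · rw [Q2_span hI, finrank_span_eq_card (lid2 hI)]
    simp
  · intro a b c hinj
    set l : MvPolynomial (Fin 3) K := C a * X 0 + C b * X 1 + C c * X 2 with hl
    have hx : ∀ i : Fin 3, (X i : MvPolynomial (Fin 3) K) ∈ homogeneousSubmodule (Fin 3) K 1 :=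
      fun i => (mem_homogeneousSubmodule _ _).mpr (isHomogeneous_X _ _)
    have hlh : l ∈ homogeneousSubmodule (Fin 3) K 1 := by
      rw [hl, C_mul', C_mul', C_mul']
      exact Submodule.add_mem _ (Submodule.add_mem _ (Submodule.smul_mem _ _ (hx 0))
        (Submodule.smul_mem _ _ (hx 1))) (Submodule.smul_mem _ _ (hx 2))
    have hmem : Ideal.Quotient.mk I l ∈ Qpiece I 1 := ⟨l, hlh, rfl⟩
    have hsq : l * l ∈ I := by
      haveI : Fact (Nat.Prime 2) := ⟨Nat.prime_two⟩
      have h2 : l ^ 2 = (C a * X 0) ^ 2 + (C b * X 1) ^ 2 + (C c * X 2) ^ 2 := by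
        rw [hl, add_pow_char, add_pow_char]
      have hterm : ∀ (r : K) (i : Fin 3), (C r * X i : MvPolynomial (Fin 3) K) ^ 2 ∈ I := by
        intro r i
        rw [mul_pow]
        exact Ideal.mul_mem_left _ _ (sq_memI hI i)
      rw [← pow_two, h2]
      exact Ideal.add_mem _ (Ideal.add_mem _ (hterm a 0) (hterm b 1)) (hterm c 2)
    by_cases h0 : a = 0 ∧ b = 0 ∧ c = 0
    · obtain ⟨rfl, rfl, rfl⟩ := h0
      have hl0 : l = 0 := by rw [hl]; simp
      have h1 : Ideal.Quotient.mk I (X 0) ∈ Qpiece I 1 := ⟨X 0, hx 0, rfl⟩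
      have h2 : Ideal.Quotient.mk I (X 1) ∈ Qpiece I 1 := ⟨X 1, hx 1, rfl⟩
      have heq := hinj _ h1 _ h2 (by rw [hl0]; simp)
      rw [Ideal.Quotient.mk_eq_mk_iff_sub_mem] at heq
      have hd := sfCoeff hI _ heq (Finsupp.single 0 1) (sf_single 0)
      rw [coeff_sub] at hd
      simp [coeff_X', Finsupp.single_left_inj] at hd
    · have hz : (0 : MvPolynomial (Fin 3) K ⧸ I) ∈ Qpiece I 1 := (Qpiece I 1).zero_mem
      have hmul : Ideal.Quotient.mk I l * Ideal.Quotient.mk I l = Ideal.Quotient.mk I l * 0 := by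
        rw [mul_zero, ← map_mul]
        exact Ideal.Quotient.eq_zero_iff_mem.mpr hsq
      have heq := hinj _ hmem 0 hz hmul
      rw [Ideal.Quotient.eq_zero_iff_mem] at heq
      apply h0
      refine ⟨?_, ?_, ?_⟩
      · have := sfCoeff hI _ heq (Finsupp.single 0 1) (sf_single 0)
        rw [hl] at this
        simp [coeff_add, coeff_C_mul, coeff_X', Finsupp.single_left_inj] at this
        exact this
      · have := sfCoeff hI _ heq (Finsupp.single 1 1) (sf_single 1)
        rw [hl] at this
        simp [coeff_add, coeff_C_mul, coeff_X', Finsupp.single_left_inj] at this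
        exact this
      · have := sfCoeff hI _ heq (Finsupp.single 2 1) (sf_single 2)
        rw [hl] at this
        simp [coeff_add, coeff_C_mul, coeff_X', Finsupp.single_left_inj] at this
        exact this
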